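/- Let d be a finite sequence of length n ≥ 1 with non-negative terms, not all zero. Then 1 ≤ ρ(d) ≤ √n, and moreover ρ(d) < √2·‖d‖_∞/‖d‖₂, where ‖d‖_∞ = max_i d_i and ‖d‖₂ = √((1/n)·Σ_{i=1}^{n} d_i²). -/

import Mathlib

/-!
Let `s` be the non-increasing rearrangement of `d`, `S = ∑ sᵢ²` and `k` the split index.
Minimality of `k` gives `∑_{i<k} sᵢ² < ∑_{i≥k} sᵢ² ≤ n s_k²`, hence `S < 2 n s_k²`, i.e.
`‖d‖₂ < √2 s_k`; as `‖d‖_∞ = s₀` this is the last bound. When `k > 0` also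
`s₀² ≤ ∑_{i<k} sᵢ² < n s_k²`, which is `ρ(d) ≤ √n`; `ρ(d) ≥ 1` is monotonicity.
-/

-- `rho d = ρ(d)` for a finite sequence `d` with non-negative terms: with `d₁ ≥ … ≥ dₙ`
-- the non-increasing rearrangement of `d` and `k` the smallest index (1-based) with
-- `d₁² + … + d_k² ≥ d_{k+1}² + … + dₙ²`, `ρ(d) = d₁ / d_k` if `d_k ≠ 0`, else `ρ(d) = 1`.
open Classical in
noncomputable def rho {n : ℕ} (d : Fin n → ℝ) : ℝ :=
  if hn : 0 < n then
    -- `s` is the non-increasing rearrangement of `d`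
    let s : Fin n → ℝ := fun i => d (Tuple.sort d i.rev)
    -- `k` is the smallest (0-based) index with `s 0 ^ 2 + … + s k ^ 2 ≥` the remaining sum
    let k : Fin n := ⟨min (sInf {k : ℕ |
        ∑ i : Fin n, (if k < (i : ℕ) then s i ^ 2 else 0) ≤
        ∑ i : Fin n, (if (i : ℕ) ≤ k then s i ^ 2 else 0)}) (n - 1),
      lt_of_le_of_lt (min_le_right _ _) (Nat.sub_lt hn one_pos)⟩
    if s k ≠ 0 then s ⟨0, hn⟩ / s k else 1
  else 1

open Finset

section

variable {n : ℕ}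

noncomputable def sortDesc (d : Fin n → ℝ) : Fin n → ℝ := fun i => d (Tuple.sort d i.rev)

lemma antitone_sortDesc (d : Fin n → ℝ) : Antitone (sortDesc d) :=
  fun _ _ hij => Tuple.monotone_sort d (Fin.rev_le_rev.mpr hij)

lemma sum_comp_sortDesc (d : Fin n → ℝ) (f : ℝ → ℝ) :
    ∑ i, f (sortDesc d i) = ∑ i, f (d i) :=
  Fintype.sum_equiv (Fin.revPerm.trans (Tuple.sort d)) _ _ fun _ => rfl

lemma sup'_eq_sortDesc_zero (d : Fin n → ℝ) (hn : 0 < n) (h : (univ : Finset (Fin n)).Nonempty) :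
    univ.sup' h d = sortDesc d ⟨0, hn⟩ := by
  refine le_antisymm (sup'_le _ _ fun i _ => ?_) (le_sup' d (mem_univ _))
  have hi : d i = sortDesc d ((Tuple.sort d).symm i).rev := by simp [sortDesc]
  exact hi ▸ antitone_sortDesc d (Fin.le_def.mpr (Nat.zero_le _))

open Classical in
noncomputable def splitIndex (s : Fin n → ℝ) : ℕ :=
  sInf {k : ℕ |
    ∑ i : Fin n, (if k < (i : ℕ) then s i ^ 2 else 0) ≤
    ∑ i : Fin n, (if (i : ℕ) ≤ k then s i ^ 2 else 0)}

lemma splitIndex_le (s : Fin n → ℝ) : splitIndex s ≤ n - 1 := by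
  refine Nat.sInf_le ?_
  have htail : ∑ i : Fin n, (if n - 1 < (i : ℕ) then s i ^ 2 else 0) = 0 :=
    sum_eq_zero fun i _ => if_neg (by omega)
  simp only [Set.mem_ofPred_eq, htail]
  exact sum_nonneg fun i _ => by positivity

lemma splitIndex_lt (hn : 0 < n) (s : Fin n → ℝ) : splitIndex s < n := by
  have := splitIndex_le s
  omega

lemma rho_eq (d : Fin n → ℝ) (hn : 0 < n) (k : Fin n) (hk : (k : ℕ) = splitIndex (sortDesc d)) :
    rho d = if sortDesc d k ≠ 0 then sortDesc d ⟨0, hn⟩ / sortDesc d k else 1 := by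
  obtain rfl : k = ⟨min (splitIndex (sortDesc d)) (n - 1),
      (min_le_right _ _).trans_lt (Nat.sub_lt hn one_pos)⟩ :=
    Fin.ext (hk.trans (min_eq_left (splitIndex_le _)).symm)
  rw [rho, dif_pos hn]
  rfl

-- Minimality of the split index `k` applied to `k - 1`; when `k = 0` it is `s ≠ 0` instead.
lemma sum_sq_lt_sum_sq_splitIndex (s : Fin n → ℝ) (hS : 0 < ∑ i, s i ^ 2) :
    ∑ i ∈ univ.filter (fun i : Fin n => (i : ℕ) < splitIndex s), s i ^ 2 <
      ∑ i ∈ univ.filter (fun i : Fin n => splitIndex s ≤ (i : ℕ)), s i ^ 2 := by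
  rcases Nat.eq_zero_or_pos (splitIndex s) with hk | hk
  · simpa [hk] using hS
  have hk' : splitIndex s - 1 ∉ _ := Nat.notMem_of_lt_sInf (Nat.sub_lt hk one_pos)
  simp only [Set.mem_ofPred_eq, not_le] at hk'
  have hlt : ∀ i : Fin n, (i : ℕ) ≤ splitIndex s - 1 ↔ (i : ℕ) < splitIndex s := fun i => by omega
  have hge : ∀ i : Fin n, splitIndex s - 1 < (i : ℕ) ↔ splitIndex s ≤ (i : ℕ) := fun i => by omega
  simpa only [hlt, hge, ← sum_filter] using hk'

section Antitone

variable {s : Fin n → ℝ} (hs : Antitone s) (h0 : ∀ i, 0 ≤ s i)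
include hs h0

lemma sum_sq_tail_le_of_antitone (k : Fin n) :
    ∑ i ∈ univ.filter (fun i : Fin n => (k : ℕ) ≤ (i : ℕ)), s i ^ 2 ≤ n * s k ^ 2 :=
  calc _ ≤ #(univ.filter (fun i : Fin n => (k : ℕ) ≤ (i : ℕ))) • s k ^ 2 :=
        sum_le_card_nsmul _ _ _ fun i hi => pow_le_pow_left₀ (h0 i) (hs (mem_filter.1 hi).2) 2
    _ ≤ n * s k ^ 2 := by
        rw [nsmul_eq_mul]
        gcongr
        exact_mod_cast (card_filter_le _ _).trans (card_univ.trans (Fintype.card_fin n)).le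

lemma sum_sq_lt_two_mul_sq_splitIndex (hS : 0 < ∑ i, s i ^ 2) (k : Fin n)
    (hk : (k : ℕ) = splitIndex s) : ∑ i, s i ^ 2 < 2 * n * s k ^ 2 := by
  have hsplit := sum_filter_add_sum_filter_not univ
    (fun i : Fin n => (i : ℕ) < splitIndex s) (fun i => s i ^ 2)
  simp only [not_lt] at hsplit
  have htail := sum_sq_tail_le_of_antitone hs h0 k
  rw [hk] at htail
  linarith [sum_sq_lt_sum_sq_splitIndex s hS]

lemma sq_zero_le_mul_sq_splitIndex (hn : 0 < n) (hS : 0 < ∑ i, s i ^ 2) (k : Fin n)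
    (hk : (k : ℕ) = splitIndex s) : s ⟨0, hn⟩ ^ 2 ≤ n * s k ^ 2 := by
  rcases Nat.eq_zero_or_pos (splitIndex s) with hk0 | hk0
  · obtain rfl : k = ⟨0, hn⟩ := Fin.ext (hk.trans hk0)
    exact le_mul_of_one_le_left (sq_nonneg _) (by exact_mod_cast hn)
  have htail := sum_sq_tail_le_of_antitone hs h0 k
  rw [hk] at htail
  calc s ⟨0, hn⟩ ^ 2
      ≤ ∑ i ∈ univ.filter (fun i : Fin n => (i : ℕ) < splitIndex s), s i ^ 2 :=
        single_le_sum (f := fun i => s i ^ 2) (fun i _ => sq_nonneg _) (by simpa using hk0)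
    _ ≤ n * s k ^ 2 := (sum_sq_lt_sum_sq_splitIndex s hS).le.trans htail

end Antitone

end

lemma div_lt_sqrt_two_mul_div_sqrt {a b m S : ℝ} (ha : 0 < a) (hb : 0 < b) (hm : 0 < m)
    (hS : 0 < S) (h : S < 2 * m * b ^ 2) : a / b < √2 * (a / √(S / m)) := by
  have hroot : √(S / m) < √2 * b := by
    rw [Real.sqrt_lt' (by positivity), mul_pow, Real.sq_sqrt zero_le_two, div_lt_iff₀ hm]
    linarith
  rw [mul_div_assoc', lt_div_iff₀ (by positivity), div_mul_eq_mul_div, div_lt_iff₀ hb]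
  nlinarith

/-- Basic bounds on `ρ`: for a non-zero sequence `d` of `n ≥ 1` non-negative terms,
`1 ≤ ρ(d) ≤ √n` and `ρ(d) < √2·‖d‖_∞/‖d‖₂`, where `‖d‖₂ = √((1/n)·Σ dᵢ²)`. -/
theorem statement19 (n : ℕ) (hn : 1 ≤ n) (d : Fin n → ℝ) (hd : ∀ i, 0 ≤ d i)
    (hne : ∃ i, d i ≠ 0) :
    1 ≤ rho d ∧ rho d ≤ Real.sqrt n ∧
      rho d < Real.sqrt 2 *
        ((Finset.univ.sup' (Finset.univ_nonempty_iff.mpr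
            (Fin.pos_iff_nonempty.mp hn)) d) /
          Real.sqrt ((∑ i, d i ^ 2) / (n : ℝ))) := by
  set s := sortDesc d
  have hs : Antitone s := antitone_sortDesc d
  have h0 : ∀ i, 0 ≤ s i := fun _ => hd _
  have hSd : ∑ i, s i ^ 2 = ∑ i, d i ^ 2 := sum_comp_sortDesc d (· ^ 2)
  have hS : 0 < ∑ i, s i ^ 2 := by
    obtain ⟨i, hi⟩ := hne
    exact hSd ▸ sum_pos' (fun j _ => sq_nonneg (d j)) ⟨i, mem_univ i, by positivity⟩
  set k : Fin n := ⟨splitIndex s, splitIndex_lt hn s⟩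
  have hmass := sum_sq_lt_two_mul_sq_splitIndex hs h0 hS k rfl
  have hpeak := sq_zero_le_mul_sq_splitIndex hs h0 hn hS k rfl
  have hk : 0 < s k := (h0 k).lt_of_ne fun h => by rw [← h] at hmass; linarith
  have hpeak_ge : s k ≤ s ⟨0, hn⟩ := hs (Fin.le_def.mpr (Nat.zero_le _))
  have hpeak_pos : 0 < s ⟨0, hn⟩ := hk.trans_le hpeak_ge
  rw [rho_eq d hn k rfl, if_pos hk.ne', sup'_eq_sortDesc_zero d hn, ← hSd]
  refine ⟨(one_le_div hk).mpr hpeak_ge, ?_, ?_⟩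
  · rw [Real.le_sqrt' (div_pos hpeak_pos hk), div_pow, div_le_iff₀ (by positivity)]
    exact hpeak
  · exact div_lt_sqrt_two_mul_div_sqrt hpeak_pos hk (by exact_mod_cast hn) hS hmass
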